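/- A set A ⊆ ℕ is dynamically thick if and only if for every B ⊆ ℕ with A ⊆ B and B ≠ ℕ there exists a finite set F ⊆ ℕ \ B such that the set B − F is thick. -/

import Mathlib

/-- The set `A - n`, difference taken inside the positive integers:
`A - n = {m : m >= 1 and m + n ∈ A}`. -/
def NSub (A : Set ℕ) (n : ℕ) : Set ℕ := {m : ℕ | 0 < m ∧ m + n ∈ A}

/-- `S ⊆ ℕ` is thick if every finite subset of `ℕ` has a translate inside `S`. -/
def Thick (S : Set ℕ) : Prop :=
  ∀ F : Finset ℕ, ∃ n : ℕ, 0 < n ∧ ∀ f ∈ F, f + n ∈ S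

/-- A topological dynamical system: a nonempty compact metric space together with a
continuous self-map. -/
structure MetricDynSystem where
  carrier : Type
  [metric : MetricSpace carrier]
  [cpt : CompactSpace carrier]
  [carrier_nonempty : Nonempty carrier]
  map : carrier → carrier
  continuous_map : Continuous map

attribute [instance] MetricDynSystem.metric MetricDynSystem.cpt MetricDynSystem.carrier_nonempty

/-- A system is minimal if every point has dense forward orbit `{T^n x : n ∈ ℕ}`. -/
def MetricDynSystem.Minimal (S : MetricDynSystem) : Prop :=
  ∀ x : S.carrier, Dense {y : S.carrier | ∃ n : ℕ, 0 < n ∧ S.map^[n] x = y}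

/-- `A` is dynamically thick: for every minimal system, every point `x` and every
nonempty open `U`, some `n ∈ A` has `T^n x ∈ U`. -/
def DynThick (A : Set ℕ) : Prop :=
  ∀ S : MetricDynSystem, S.Minimal →
    ∀ (x : S.carrier) (U : Set S.carrier), IsOpen U → U.Nonempty →
      ∃ n ∈ A, 0 < n ∧ S.map^[n] x ∈ U

open Set Filter Topology Function

/-!
Sufficiency: for a minimal system, `x` and `U`, let `R = {n > 0 | T^n x ∈ U}` and suppose
`A ∩ R = ∅`. Applying the hypothesis to `B = ℕ \ R ⊇ A` gives a finite `F ⊆ R`, hence an open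
`V = ⋂_{f ∈ F} T^{-f} U ∋ x`. By compactness and minimality every point enters `V` within a
bounded time, so thickness of `B − F` yields `n` and `f ∈ F` with `n + f ∈ B` and
`T^(n + f) x ∈ U`, contradicting `B ∩ R = ∅`.

Necessity: if some `B ⊇ A` admits no such `F`, then every finite `P ⊆ C = ℕ \ B` returns into
`C` (`m + P ⊆ C`) along a syndetic set of times `m`. This lets us build a nonempty uniformly
recurrent `D ⊆ C` as the union of increasing blocks: block `k + 1` is block `k`, then a copy of it
at its first return into `C`, the gap between them filled greedily and recursively with copies of
the earlier blocks at their own first returns. The orbit closure of the indicator of `D` under the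
shift is a minimal system in which that indicator visits the cylinder `{w | w 0 = true}` exactly at
the times in `D ⊆ C`, so never at a time in `A`.
-/

open Set Filter Topology Function

def Syndetic (S : Set ℕ) : Prop :=
  ∃ N, ∀ a, ∃ m ∈ S, a < m ∧ m ≤ a + N

theorem syndetic_compl_of_not_thick {S : Set ℕ} (h : ¬ Thick S) : Syndetic Sᶜ := by
  simp only [Thick, not_forall, not_exists, not_and] at h
  obtain ⟨E, hE⟩ := h
  refine ⟨E.sup id + 1, fun a => ?_⟩
  obtain ⟨f, hf, hfS⟩ := hE (a + 1) (Nat.succ_pos a)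
  have : f ≤ E.sup id := Finset.le_sup (f := id) hf
  exact ⟨f + (a + 1), hfS, by omega, by omega⟩

theorem MetricDynSystem.Minimal.exists_finset_iterate_mem {S : MetricDynSystem}
    (hS : S.Minimal) {V : Set S.carrier} (hV : IsOpen V) (hne : V.Nonempty) :
    ∃ K : Finset ℕ, ∀ z, ∃ k ∈ K, S.map^[k + 1] z ∈ V := by
  have hcover : univ ⊆ ⋃ k : ℕ, S.map^[k + 1] ⁻¹' V := fun z _ => by
    obtain ⟨_, ⟨n, hn, rfl⟩, hnV⟩ := (hS z).exists_mem_open hV hne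
    obtain ⟨k, rfl⟩ := Nat.exists_eq_add_of_lt hn
    exact mem_iUnion.2 ⟨k, by simpa using hnV⟩
  obtain ⟨K, hK⟩ := isCompact_univ.elim_finite_subcover _
    (fun k => hV.preimage (S.continuous_map.iterate (k + 1))) hcover
  exact ⟨K, fun z => by simpa using hK (mem_univ z)⟩

theorem dynThick_of_forall_thick {A : Set ℕ}
    (h : ∀ B : Set ℕ, A ⊆ B → B ≠ univ →
      ∃ F : Finset ℕ, (∀ f ∈ F, f ∉ B) ∧ Thick (⋃ f ∈ F, NSub B f)) :
    DynThick A := by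
  intro S hS x U hU hUne
  obtain ⟨_, ⟨n₀, hn₀, rfl⟩, hn₀U⟩ := (hS x).exists_mem_open hU hUne
  by_contra! hA
  set B : Set ℕ := {n | 0 < n → S.map^[n] x ∉ U}
  obtain ⟨F, hFB, hthick⟩ := h B hA fun hB => (hB ▸ mem_univ n₀ : n₀ ∈ B) hn₀ hn₀U
  set V := ⋂ f ∈ F, S.map^[f] ⁻¹' U
  have hxV : x ∈ V := mem_iInter₂.2 fun f hf => (by simpa [B] using hFB f hf : 0 < f ∧ _).2
  obtain ⟨K, hK⟩ := hS.exists_finset_iterate_mem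
    (isOpen_biInter_finset fun f _ => hU.preimage (S.continuous_map.iterate f)) ⟨x, hxV⟩
  obtain ⟨n, hn, hnK⟩ := hthick (K.image (· + 1))
  obtain ⟨k, hkK, hkV⟩ := hK (S.map^[n] x)
  obtain ⟨f, hfF, -, hfB⟩ : ∃ f ∈ F, 0 < k + 1 + n ∧ k + 1 + n + f ∈ B := by
    simpa [NSub] using hnK (k + 1) (Finset.mem_image_of_mem _ hkK)
  refine hfB (by omega) ?_
  have hfU := mem_iInter₂.1 hkV f hfF
  rwa [mem_preimage, ← iterate_add_apply, ← iterate_add_apply,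
    show f + (k + 1) + n = k + 1 + n + f by omega] at hfU

def IsUniformlyRecurrentPt {X : Type*} [TopologicalSpace X] (T : X → X) (x : X) : Prop :=
  ∀ U ∈ 𝓝 x, Syndetic {n | T^[n] x ∈ U}

theorem IsUniformlyRecurrentPt.exists_pos_iterate_mem {X : Type*} [TopologicalSpace X]
    [RegularSpace X] {T : X → X} {x : X} (hx : IsUniformlyRecurrentPt T x) (hT : Continuous T)
    {y : X} (hy : y ∈ closure (range fun n => T^[n] x)) {U : Set X} (hU : U ∈ 𝓝 x) :
    ∃ k, 0 < k ∧ T^[k] y ∈ U := by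
  obtain ⟨V, hV, hVc, hVU⟩ := exists_mem_nhds_isClosed_subset hU
  obtain ⟨N, hN⟩ := hx V hV
  have hclosed : IsClosed (⋃ k ∈ Finset.Icc 1 N, T^[k] ⁻¹' V) :=
    isClosed_biUnion_finset fun k _ => hVc.preimage (hT.iterate k)
  have hrange : range (fun n => T^[n] x) ⊆ ⋃ k ∈ Finset.Icc 1 N, T^[k] ⁻¹' V := by
    rintro _ ⟨n, rfl⟩
    obtain ⟨m, hmV, hnm, hmN⟩ := hN n
    refine mem_biUnion (Finset.mem_Icc.2 ⟨by omega, by omega⟩ : m - n ∈ _) ?_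
    rwa [mem_preimage, ← iterate_add_apply, Nat.sub_add_cancel hnm.le]
  obtain ⟨k, hk, hkV⟩ := mem_iUnion₂.1 (hclosed.closure_subset_iff.2 hrange hy)
  exact ⟨k, (Finset.mem_Icc.1 hk).1, hVU hkV⟩

section OrbitClosure

theorem mapsTo_closure_orbit {X : Type*} [TopologicalSpace X] {T : X → X} (hT : Continuous T)
    (x : X) :
    MapsTo T (closure (range fun n => T^[n] x)) (closure (range fun n => T^[n] x)) := by
  refine MapsTo.closure ?_ hT
  rintro _ ⟨n, rfl⟩
  exact ⟨n + 1, iterate_succ_apply' T n x⟩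

variable {X : Type} [TopologicalSpace X] [CompactSpace X] [TopologicalSpace.MetrizableSpace X]
  {T : X → X} (hT : Continuous T) (x : X)

noncomputable def orbitClosureSystem : MetricDynSystem where
  carrier := closure (range fun n => T^[n] x)
  metric := TopologicalSpace.metrizableSpaceMetric _
  cpt := isCompact_iff_compactSpace.1 isClosed_closure.isCompact
  carrier_nonempty := ⟨⟨x, subset_closure ⟨0, rfl⟩⟩⟩
  map := (mapsTo_closure_orbit hT x).restrict _ _ _
  continuous_map := (hT.comp continuous_subtype_val).subtype_mk _

theorem orbitClosureSystem_map_iterate (n : ℕ) (p : closure (range fun n => T^[n] x)) :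
    Subtype.val ((orbitClosureSystem hT x).map^[n] p) = T^[n] p :=
  congrArg Subtype.val (congrFun ((mapsTo_closure_orbit hT x).iterate_restrict n) p)

theorem IsUniformlyRecurrentPt.orbitClosureSystem_minimal (hx : IsUniformlyRecurrentPt T x) :
    (orbitClosureSystem hT x).Minimal := by
  intro p
  refine dense_iff_inter_open.2 fun U hU ⟨q, hqU⟩ => ?_
  obtain ⟨t, ht, rfl⟩ := isOpen_induced_iff.1 hU
  obtain ⟨_, hnt, n, rfl⟩ := mem_closure_iff.1 q.2 t ht hqU
  obtain ⟨k, hk, hkt⟩ :=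
    hx.exists_pos_iterate_mem hT p.2 ((ht.preimage (hT.iterate n)).mem_nhds hnt)
  refine ⟨_, ?_, n + k, by omega, rfl⟩
  have h := (orbitClosureSystem_map_iterate hT x (n + k) p).trans (iterate_add_apply T n k p.1)
  exact show Subtype.val _ ∈ t from h ▸ hkt

end OrbitClosure

theorem DynThick.exists_iterate_mem {A : Set ℕ} (hA : DynThick A) {X : Type}
    [TopologicalSpace X] [CompactSpace X] [TopologicalSpace.MetrizableSpace X] {T : X → X}
    (hT : Continuous T) {x : X} (hx : IsUniformlyRecurrentPt T x) {U : Set X} (hU : IsOpen U)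
    {n₀ : ℕ} (hn₀ : T^[n₀] x ∈ U) : ∃ n ∈ A, 0 < n ∧ T^[n] x ∈ U := by
  obtain ⟨n, hnA, hn, hnU⟩ := hA (orbitClosureSystem hT x) (hx.orbitClosureSystem_minimal hT x)
    ⟨x, subset_closure ⟨0, rfl⟩⟩ (Subtype.val ⁻¹' U) (hU.preimage continuous_subtype_val)
    ⟨⟨_, subset_closure ⟨n₀, rfl⟩⟩, hn₀⟩
  exact ⟨n, hnA, hn, orbitClosureSystem_map_iterate hT x n ⟨x, _⟩ ▸ hnU⟩

/-- `S ∩ [m, m + L) = m + (W ∩ [0, L))`. -/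
def Occurs (W : Set ℕ) (L : ℕ) (S : Set ℕ) (m : ℕ) : Prop :=
  ∀ y < L, (m + y ∈ S ↔ y ∈ W)

namespace Occurs

variable {V W S T : Set ℕ} {L L' m q : ℕ}

theorem trans (hV : Occurs V L' W q) (hW : Occurs W L S m) (hq : q + L' ≤ L) :
    Occurs V L' S (m + q) := fun y hy => by
  rw [add_assoc, hW (q + y) (by omega), hV y hy]

theorem union_left (h : Occurs W L T m) (hS : ∀ n ∈ S, n < m) : Occurs W L (S ∪ T) m :=
  fun y hy => by
    rw [mem_union, ← h y hy]
    exact or_iff_right fun hmS => (hS _ hmS).not_ge (Nat.le_add_right m y)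

theorem union_right (h : Occurs W L S m) (hT : ∀ n ∈ T, m + L ≤ n) : Occurs W L (S ∪ T) m :=
  fun y hy => by
    rw [mem_union, ← h y hy]
    exact or_iff_left fun hmT => (hT _ hmT).not_gt (by omega)

end Occurs

theorem occurs_self (W : Set ℕ) (L : ℕ) : Occurs W L W 0 := fun y _ => by rw [zero_add]

theorem occurs_image_add (W : Set ℕ) (L m : ℕ) : Occurs W L ((m + ·) '' W) m := fun y _ => by
  simp

def IsUniformlyRecurrent (D : Set ℕ) : Prop :=
  ∀ L, Syndetic {m | Occurs D L D m}

def shift (w : ℕ → Bool) : ℕ → Bool := fun n => w (n + 1)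

theorem continuous_shift : Continuous shift :=
  continuous_pi fun n => continuous_apply (n + 1)

theorem shift_iterate_apply (w : ℕ → Bool) (n i : ℕ) : shift^[n] w i = w (i + n) := by
  induction n generalizing w with
  | zero => rfl
  | succ n ih => rw [iterate_succ_apply, ih]; rfl

theorem IsUniformlyRecurrent.isUniformlyRecurrentPt_shift {D : Set ℕ} [DecidablePred (· ∈ D)]
    (hD : IsUniformlyRecurrent D) : IsUniformlyRecurrentPt shift fun n => decide (n ∈ D) := by
  intro U hU
  obtain ⟨_, ⟨y, L, rfl⟩, hDy, hyU⟩ :=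
    (PiNat.isTopologicalBasis_cylinders fun _ => Bool).mem_nhds_iff.1 hU
  rw [← PiNat.mem_cylinder_iff_eq.1 hDy] at hyU
  obtain ⟨N, hN⟩ := hD L
  refine ⟨N, fun a => ?_⟩
  obtain ⟨m, hocc, ham, hmN⟩ := hN a
  refine ⟨m, hyU fun i hi => ?_, ham, hmN⟩
  simp [shift_iterate_apply, add_comm i m, hocc i hi]

theorem DynThick.exists_mem_of_isUniformlyRecurrent {A D : Set ℕ} (hA : DynThick A)
    (hD : IsUniformlyRecurrent D) (hne : D.Nonempty) : ∃ n ∈ A, 0 < n ∧ n ∈ D := by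
  classical
  obtain ⟨d, hd⟩ := hne
  obtain ⟨n, hnA, hn, hnD⟩ := hA.exists_iterate_mem continuous_shift
    hD.isUniformlyRecurrentPt_shift ((isOpen_discrete {true}).preimage (continuous_apply 0))
    (n₀ := d) (by simpa [shift_iterate_apply] using hd)
  exact ⟨n, hnA, hn, by simpa [shift_iterate_apply] using hnD⟩

def returnTimes (C P : Set ℕ) : Set ℕ := {m | ∀ p ∈ P, m + p ∈ C}

def HasSyndeticReturns (C : Set ℕ) : Prop :=
  ∀ P : Set ℕ, P.Finite → P ⊆ C → Syndetic (returnTimes C P)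

theorem hasSyndeticReturns_compl_of_not_thick {B : Set ℕ}
    (h : ∀ F : Finset ℕ, (∀ f ∈ F, f ∉ B) → ¬ Thick (⋃ f ∈ F, NSub B f)) :
    HasSyndeticReturns Bᶜ := by
  intro P hP hPB
  obtain ⟨N, hN⟩ :=
    syndetic_compl_of_not_thick (h hP.toFinset fun f hf => hPB (by simpa using hf))
  refine ⟨N, fun a => ?_⟩
  obtain ⟨m, hm, ham, hmN⟩ := hN a
  exact ⟨m, fun p hp hmp => hm (mem_biUnion (by simpa using hp) ⟨by omega, hmp⟩), ham, hmN⟩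

/-- The first return time after `a`, with the junk value `a + 1` if there is none. -/
noncomputable def nextReturn (C P : Set ℕ) (a : ℕ) : ℕ :=
  open Classical in
  if h : ∃ m ∈ returnTimes C P, a < m then Nat.find h else a + 1

theorem lt_nextReturn (C P : Set ℕ) (a : ℕ) : a < nextReturn C P a := by
  classical
  unfold nextReturn
  split_ifs with h
  · exact (Nat.find_spec h).2
  · exact Nat.lt_succ_self a

theorem nextReturn_spec {C P : Set ℕ} {a N : ℕ}
    (h : ∃ m ∈ returnTimes C P, a < m ∧ m ≤ a + N) :
    nextReturn C P a ∈ returnTimes C P ∧ nextReturn C P a ≤ a + N := by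
  classical
  obtain ⟨m, hm, ham, hmN⟩ := h
  have h' : ∃ m ∈ returnTimes C P, a < m := ⟨m, hm, ham⟩
  rw [nextReturn, dif_pos h']
  exact ⟨(Nat.find_spec h').1, (Nat.find_min' h' ⟨hm, ham⟩).trans hmN⟩

/-- A greedy filling of `(a, b)` with copies of the blocks `W i ⊆ [0, L i)`, `i < j`, each placed
at a return of the block into `C`, in which every block recurs with bounded gaps. -/
noncomputable def fill (C : Set ℕ) (W : ℕ → Set ℕ) (L : ℕ → ℕ) : ℕ → ℕ → ℕ → Set ℕ
  | 0, _, _ => ∅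
  | j + 1, a, b =>
    let m := nextReturn C (W j) a
    if m + L j ≤ b then fill C W L j a m ∪ (m + ·) '' W j ∪ fill C W L (j + 1) (m + L j) b
    else fill C W L j a b
termination_by j a b => (j, b - a)
decreasing_by
  all_goals first
    | exact Prod.Lex.left _ _ (Nat.lt_succ_self j)
    | exact Prod.Lex.right _ (by have := lt_nextReturn C (W j) a; omega)

/-- The window in `exists_occurs`: `W i` first occurs in a fill within `G i + L i + 1` of its left
end (`exists_occurs_fill_near_start`), and a window may start up to `L i` before that end. -/
structure IsGoodBlock (C : Set ℕ) (W : ℕ → Set ℕ) (L G : ℕ → ℕ) (k : ℕ) : Prop where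
  subset : W k ⊆ C
  lt_len : ∀ y ∈ W k, y < L k
  returns : ∀ a, ∃ m ∈ returnTimes C (W k), a < m ∧ m ≤ a + G k
  len_le : ∀ i ≤ k, L i ≤ L k
  occurs_zero : ∀ i ≤ k, Occurs (W i) (L i) (W k) 0
  exists_occurs : ∀ i ≤ k, ∀ x, x + L i ≤ L k →
    ∃ m, x ≤ m ∧ m ≤ x + G i + 2 * L i + 1 ∧ m + L i ≤ L k ∧ Occurs (W i) (L i) (W k) m

section Fill

variable {C : Set ℕ} {W : ℕ → Set ℕ} {L G : ℕ → ℕ}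

theorem IsGoodBlock.nextReturn_le {k : ℕ} (h : IsGoodBlock C W L G k) (a : ℕ) :
    nextReturn C (W k) a ≤ a + G k :=
  (nextReturn_spec (h.returns a)).2

theorem IsGoodBlock.image_nextReturn_subset {k : ℕ} (h : IsGoodBlock C W L G k) (a : ℕ) :
    (nextReturn C (W k) a + ·) '' W k ⊆
      C ∩ Ico (nextReturn C (W k) a) (nextReturn C (W k) a + L k) := by
  rintro _ ⟨p, hp, rfl⟩
  exact ⟨(nextReturn_spec (h.returns a)).1 p hp, by simp, by simpa using h.lt_len p hp⟩

theorem fill_succ_of_le {j a b : ℕ} (h : nextReturn C (W j) a + L j ≤ b) :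
    fill C W L (j + 1) a b = fill C W L j a (nextReturn C (W j) a) ∪
      (nextReturn C (W j) a + ·) '' W j ∪ fill C W L (j + 1) (nextReturn C (W j) a + L j) b := by
  rw [fill, if_pos h]

theorem fill_succ_of_lt {j a b : ℕ} (h : b < nextReturn C (W j) a + L j) :
    fill C W L (j + 1) a b = fill C W L j a b := by
  rw [fill, if_neg (not_le.2 h)]

theorem fill_subset {j a b : ℕ} (hW : ∀ i < j, IsGoodBlock C W L G i) :
    fill C W L j a b ⊆ C ∩ Ioo a b := by
  induction j, a, b using fill.induct C W L with
  | case1 => simp [fill]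
  | case2 j a b m hroom ihl ihr =>
    have hm := lt_nextReturn C (W j) a
    rw [fill_succ_of_le hroom]
    rintro n ((hn | hn) | hn)
    · have := ihl (fun i hi => hW i (by omega)) hn
      exact ⟨this.1, this.2.1, by have := this.2.2; omega⟩
    · have := (hW j (Nat.lt_succ_self j)).image_nextReturn_subset a hn
      exact ⟨this.1, by have := this.2.1; omega, by have := this.2.2; omega⟩
    · have := ihr hW hn
      exact ⟨this.1, by have := this.2.1; omega, this.2.2⟩
  | case3 j a b m hroom ih =>
    rw [fill_succ_of_lt (not_le.1 hroom)]
    exact ih fun i hi => hW i (by omega)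

section FillSucc

variable {V : Set ℕ} {ℓ m j a b : ℕ}

theorem Occurs.fill_succ_of_left (hW : ∀ i < j + 1, IsGoodBlock C W L G i)
    (hroom : nextReturn C (W j) a + L j ≤ b)
    (h : Occurs V ℓ (fill C W L j a (nextReturn C (W j) a)) m)
    (hm : m + ℓ ≤ nextReturn C (W j) a) : Occurs V ℓ (fill C W L (j + 1) a b) m := by
  rw [fill_succ_of_le hroom]
  refine (h.union_right fun n hn => ?_).union_right fun n hn => ?_
  · have := ((hW j (Nat.lt_succ_self j)).image_nextReturn_subset a hn).2.1; omega
  · have := (fill_subset hW hn).2.1; omega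

theorem Occurs.fill_succ_of_block (hW : ∀ i < j + 1, IsGoodBlock C W L G i)
    (hroom : nextReturn C (W j) a + L j ≤ b) (h : Occurs V ℓ (W j) m) (hm : m + ℓ ≤ L j) :
    Occurs V ℓ (fill C W L (j + 1) a b) (nextReturn C (W j) a + m) := by
  rw [fill_succ_of_le hroom]
  refine ((h.trans (occurs_image_add _ _ _) hm).union_left fun n hn => ?_).union_right
    fun n hn => ?_
  · have := (fill_subset (fun i hi => hW i (by omega)) hn).2.2; omega
  · have := (fill_subset hW hn).2.1; omega

theorem Occurs.fill_succ_of_right (hW : ∀ i < j + 1, IsGoodBlock C W L G i)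
    (hroom : nextReturn C (W j) a + L j ≤ b)
    (h : Occurs V ℓ (fill C W L (j + 1) (nextReturn C (W j) a + L j) b) m)
    (hm : nextReturn C (W j) a + L j ≤ m) : Occurs V ℓ (fill C W L (j + 1) a b) m := by
  rw [fill_succ_of_le hroom]
  refine h.union_left ?_
  rintro n (hn | hn)
  · have := (fill_subset (fun i hi => hW i (by omega)) hn).2.2; omega
  · have := ((hW j (Nat.lt_succ_self j)).image_nextReturn_subset a hn).2.2; omega

end FillSucc

theorem exists_occurs_fill_near_start {j a b i : ℕ} (hW : ∀ i < j, IsGoodBlock C W L G i)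
    (hi : i < j) (hab : a + G i + L i + 1 ≤ b) :
    ∃ m, a < m ∧ m ≤ a + G i + L i + 1 ∧ m + L i ≤ b ∧ Occurs (W i) (L i) (fill C W L j a b) m := by
  induction j, a, b using fill.induct C W L with
  | case1 => omega
  | case2 j a b m hroom ihl ihr =>
    have hj := hW j (Nat.lt_succ_self j)
    have ham := lt_nextReturn C (W j) a
    have hmG := hj.nextReturn_le a
    have hLi := hj.len_le i (by omega)
    by_cases hm : nextReturn C (W j) a ≤ a + G i + L i + 1
    · exact ⟨_, ham, hm, by omega,
        (hj.occurs_zero i (by omega)).fill_succ_of_block hW hroom (by omega)⟩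
    · have hij : i ≠ j := by rintro rfl; omega
      obtain ⟨m', ham', hm'a, hm'b, hocc⟩ :=
        ihl (fun i hi => hW i (by omega)) (by omega) (by omega)
      exact ⟨m', ham', hm'a, by omega, hocc.fill_succ_of_left hW hroom hm'b⟩
  | case3 j a b m hroom ih =>
    have := (hW j (Nat.lt_succ_self j)).nextReturn_le a
    have hij : i ≠ j := by rintro rfl; omega
    rw [fill_succ_of_lt (not_le.1 hroom)]
    exact ih (fun i hi => hW i (by omega)) (by omega) hab

theorem exists_occurs_fill {j a b i x : ℕ} (hW : ∀ i < j, IsGoodBlock C W L G i) (hi : i < j)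
    (hax : a ≤ x + L i) (hxb : x + G i + 2 * L i + 1 ≤ b) :
    ∃ m, a < m ∧ x ≤ m ∧ m ≤ x + G i + 2 * L i + 1 ∧ m + L i ≤ b ∧
      Occurs (W i) (L i) (fill C W L j a b) m := by
  induction j, a, b using fill.induct C W L with
  | case1 => omega
  | case2 j a b m hroom ihl ihr =>
    rcases lt_or_ge x a with hxa | hxa
    · obtain ⟨m, ham, hma, hmb, hocc⟩ :=
        exists_occurs_fill_near_start (a := a) (b := b) hW hi (by omega)
      exact ⟨m, ham, by omega, by omega, hmb, hocc⟩
    have hj := hW j (Nat.lt_succ_self j)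
    have ham := lt_nextReturn C (W j) a
    have hmG := hj.nextReturn_le a
    have hLi := hj.len_le i (by omega)
    by_cases hleft : x + G i + 2 * L i + 1 ≤ nextReturn C (W j) a
    · have hij : i ≠ j := by rintro rfl; omega
      obtain ⟨m', ham', hxm', hm'x, hm'b, hocc⟩ :=
        ihl (fun i hi => hW i (by omega)) (by omega) (by omega) hleft
      exact ⟨m', ham', hxm', hm'x, by omega, hocc.fill_succ_of_left hW hroom hm'b⟩
    by_cases hx_le : x ≤ nextReturn C (W j) a
    · exact ⟨_, ham, hx_le, by omega, by omega,
        (hj.occurs_zero i (by omega)).fill_succ_of_block hW hroom (by omega)⟩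
    by_cases hx_copy : x + L i ≤ nextReturn C (W j) a + L j
    · obtain ⟨q, hxq, hqx, hqL, hocc⟩ :=
        hj.exists_occurs i (by omega) (x - nextReturn C (W j) a) (by omega)
      exact ⟨_, by omega, by omega, by omega, by omega, hocc.fill_succ_of_block hW hroom hqL⟩
    · obtain ⟨m', ham', hxm', hm'x, hm'b, hocc⟩ := ihr hW hi (by omega) hxb
      exact ⟨m', by omega, hxm', hm'x, hm'b, hocc.fill_succ_of_right hW hroom ham'.le⟩
  | case3 j a b m hroom ih =>
    rcases lt_or_ge x a with hxa | hxa
    · obtain ⟨m, ham, hma, hmb, hocc⟩ :=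
        exists_occurs_fill_near_start (a := a) (b := b) hW hi (by omega)
      exact ⟨m, ham, by omega, by omega, hmb, hocc⟩
    have := (hW j (Nat.lt_succ_self j)).nextReturn_le a
    have hij : i ≠ j := by rintro rfl; omega
    rw [fill_succ_of_lt (not_le.1 hroom)]
    exact ih (fun i hi => hW i (by omega)) (by omega) hax hxb

end Fill

structure IsBlockSeq (C : Set ℕ) (c₀ : ℕ) (W : ℕ → Set ℕ) (L : ℕ → ℕ) : Prop where
  set_zero : W 0 = {c₀}
  len_zero : L 0 = c₀ + 1
  set_succ (k : ℕ) : W (k + 1) = W k ∪ fill C W L (k + 1) (L k) (nextReturn C (W k) (L k)) ∪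
    (nextReturn C (W k) (L k) + ·) '' W k
  len_succ (k : ℕ) : L (k + 1) = nextReturn C (W k) (L k) + L k

namespace IsBlockSeq

variable {C : Set ℕ} {c₀ : ℕ} {W : ℕ → Set ℕ} {L G : ℕ → ℕ} {k : ℕ}

theorem subset_succ (hS : IsBlockSeq C c₀ W L) (hW : ∀ i ≤ k, IsGoodBlock C W L G i) :
    W (k + 1) ⊆ C ∩ Iio (L (k + 1)) := by
  have hk := hW k le_rfl
  rw [hS.set_succ, hS.len_succ]
  rintro y ((hy | hy) | hy)
  · have := hk.lt_len y hy
    exact ⟨hk.subset hy, by simp only [mem_Iio]; omega⟩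
  · have := fill_subset (fun i hi => hW i (by omega)) hy
    exact ⟨this.1, by simp only [mem_Iio]; have := this.2.2; omega⟩
  · have := hk.image_nextReturn_subset (L k) hy
    exact ⟨this.1, this.2.2⟩

theorem occurs_succ_zero (hS : IsBlockSeq C c₀ W L) (hW : ∀ i ≤ k, IsGoodBlock C W L G i) :
    Occurs (W k) (L k) (W (k + 1)) 0 := by
  rw [hS.set_succ]
  refine ((occurs_self _ _).union_right fun n hn => ?_).union_right fun n hn => ?_
  · have := (fill_subset (fun i hi => hW i (by omega)) hn).2.1; omega
  · have := ((hW k le_rfl).image_nextReturn_subset (L k) hn).2.1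
    have := lt_nextReturn C (W k) (L k)
    omega

theorem occurs_succ_nextReturn (hS : IsBlockSeq C c₀ W L) (hW : ∀ i ≤ k, IsGoodBlock C W L G i) :
    Occurs (W k) (L k) (W (k + 1)) (nextReturn C (W k) (L k)) := by
  rw [hS.set_succ]
  refine (occurs_image_add _ _ _).union_left ?_
  rintro n (hn | hn)
  · have := (hW k le_rfl).lt_len n hn
    have := lt_nextReturn C (W k) (L k)
    omega
  · exact (fill_subset (fun i hi => hW i (by omega)) hn).2.2

theorem occurs_succ_of_occurs_fill {V : Set ℕ} {ℓ m : ℕ} (hS : IsBlockSeq C c₀ W L)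
    (hW : ∀ i ≤ k, IsGoodBlock C W L G i)
    (h : Occurs V ℓ (fill C W L (k + 1) (L k) (nextReturn C (W k) (L k))) m) (hkm : L k ≤ m)
    (hm : m + ℓ ≤ nextReturn C (W k) (L k)) : Occurs V ℓ (W (k + 1)) m := by
  rw [hS.set_succ]
  refine (h.union_left fun n hn => ?_).union_right fun n hn => ?_
  · have := (hW k le_rfl).lt_len n hn; omega
  · have := ((hW k le_rfl).image_nextReturn_subset (L k) hn).2.1; omega

theorem exists_occurs_succ (hS : IsBlockSeq C c₀ W L) (hW : ∀ i ≤ k, IsGoodBlock C W L G i)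
    {i x : ℕ} (hi : i ≤ k) (hx : x + L i ≤ L (k + 1)) :
    ∃ m, x ≤ m ∧ m ≤ x + G i + 2 * L i + 1 ∧ m + L i ≤ L (k + 1) ∧
      Occurs (W i) (L i) (W (k + 1)) m := by
  have hk := hW k le_rfl
  have hLi := hk.len_le i hi
  have hLk := lt_nextReturn C (W k) (L k)
  rw [hS.len_succ] at hx ⊢
  by_cases hxk : x + L i ≤ L k
  · obtain ⟨q, hxq, hqx, hqL, hocc⟩ := hk.exists_occurs i hi x hxk
    exact ⟨q, hxq, hqx, by omega, by simpa using hocc.trans (hS.occurs_succ_zero hW) hqL⟩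
  by_cases hmx : nextReturn C (W k) (L k) ≤ x
  · obtain ⟨q, hxq, hqx, hqL, hocc⟩ :=
      hk.exists_occurs i hi (x - nextReturn C (W k) (L k)) (by omega)
    exact ⟨_, by omega, by omega, by omega, hocc.trans (hS.occurs_succ_nextReturn hW) hqL⟩
  by_cases hmK : nextReturn C (W k) (L k) ≤ x + G i + 2 * L i + 1
  · refine ⟨_, by omega, hmK, by omega, ?_⟩
    simpa using (hk.occurs_zero i hi).trans (hS.occurs_succ_nextReturn hW) (by simpa using hLi)
  obtain ⟨m, hkm, hxm, hmx, hmm, hocc⟩ := exists_occurs_fill (a := L k)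
    (b := nextReturn C (W k) (L k)) (x := x) (fun i hi => hW i (by omega)) (Nat.lt_succ_of_le hi)
    (by omega) (by omega)
  exact ⟨m, hxm, hmx, by omega, hS.occurs_succ_of_occurs_fill hW hocc hkm.le hmm⟩

theorem isGoodBlock_zero (hS : IsBlockSeq C c₀ W L) (hc₀ : c₀ ∈ C)
    (hreturns : ∀ a, ∃ m ∈ returnTimes C (W 0), a < m ∧ m ≤ a + G 0) :
    IsGoodBlock C W L G 0 := by
  refine ⟨by simpa [hS.set_zero] using hc₀, by simp [hS.set_zero, hS.len_zero], hreturns,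
    fun i hi => ?_, fun i hi => ?_, fun i hi x hx => ?_⟩ <;> obtain rfl := Nat.le_zero.1 hi
  · exact le_rfl
  · exact occurs_self _ _
  · exact ⟨0, by omega, by omega, by omega, occurs_self _ _⟩

theorem isGoodBlock_succ (hS : IsBlockSeq C c₀ W L) (hW : ∀ i ≤ k, IsGoodBlock C W L G i)
    (hreturns : ∀ a, ∃ m ∈ returnTimes C (W (k + 1)), a < m ∧ m ≤ a + G (k + 1)) :
    IsGoodBlock C W L G (k + 1) := by
  have hk := hW k le_rfl
  have hsub := hS.subset_succ hW
  refine ⟨fun y hy => (hsub hy).1, fun y hy => (hsub hy).2, hreturns, fun i hi => ?_,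
    fun i hi => ?_, fun i hi x hx => ?_⟩ <;> rcases hi.lt_or_eq with hi | rfl
  · have := hk.len_le i (by omega)
    have := lt_nextReturn C (W k) (L k)
    rw [hS.len_succ]; omega
  · exact le_rfl
  · exact (hk.occurs_zero i (by omega)).trans (hS.occurs_succ_zero hW)
      (by simpa using hk.len_le i (by omega))
  · exact occurs_self _ _
  · exact hS.exists_occurs_succ hW (by omega) hx
  · exact ⟨0, by omega, by omega, by omega, occurs_self _ _⟩

theorem isGoodBlock (hS : IsBlockSeq C c₀ W L) (hc₀ : c₀ ∈ C) {g : Set ℕ → ℕ}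
    (hg : ∀ P : Set ℕ, P.Finite → P ⊆ C → ∀ a, ∃ m ∈ returnTimes C P, a < m ∧ m ≤ a + g P)
    (k : ℕ) : IsGoodBlock C W L (fun k => g (W k)) k := by
  induction k using Nat.strong_induction_on with
  | _ k ih =>
    cases k with
    | zero => exact hS.isGoodBlock_zero hc₀ (hg _ (by simp [hS.set_zero]) (by simpa [hS.set_zero]))
    | succ k =>
      have hW : ∀ i ≤ k, IsGoodBlock C W L (fun k => g (W k)) i := fun i hi => ih i (by omega)
      have hsub := hS.subset_succ hW
      exact hS.isGoodBlock_succ hW (hg _ ((finite_Iio _).subset fun y hy => (hsub hy).2)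
        fun y hy => (hsub hy).1)

theorem strictMono_len (hS : IsBlockSeq C c₀ W L) : StrictMono L :=
  strictMono_nat_of_lt_succ fun k => by
    have := lt_nextReturn C (W k) (L k)
    rw [hS.len_succ]
    omega

end IsBlockSeq

section Limit

variable {C : Set ℕ} {W : ℕ → Set ℕ} {L G : ℕ → ℕ}

theorem occurs_iUnion (hW : ∀ k, IsGoodBlock C W L G k) (k : ℕ) :
    Occurs (W k) (L k) (⋃ i, W i) 0 := fun y hy => by
  rw [zero_add, mem_iUnion]
  refine ⟨fun ⟨t, ht⟩ => ?_, fun h => ⟨k, h⟩⟩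
  rcases le_total t k with htk | hkt
  · simpa using ((hW k).occurs_zero t htk y ((hW t).lt_len y ht)).2 ht
  · exact ((hW t).occurs_zero k hkt y hy).1 (by rwa [zero_add])

theorem isUniformlyRecurrent_iUnion (hW : ∀ k, IsGoodBlock C W L G k) (hL : StrictMono L) :
    IsUniformlyRecurrent (⋃ i, W i) := by
  intro ℓ
  refine ⟨G ℓ + 2 * L ℓ + 2, fun a => ?_⟩
  have hℓ : ℓ ≤ L ℓ := hL.id_le ℓ
  have ht : a + 1 + L ℓ ≤ L (a + 1 + L ℓ) := hL.id_le _
  obtain ⟨m, ham, hma, hmL, hocc⟩ :=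
    (hW (a + 1 + L ℓ)).exists_occurs ℓ (by omega) (a + 1) (by omega)
  refine ⟨m, fun y hy => ?_, by omega, by omega⟩
  rw [← zero_add m, (hocc.trans (occurs_iUnion hW _) hmL) y (by omega),
    ← (occurs_iUnion hW ℓ) y (by omega), zero_add]

end Limit

theorem fill_congr {C : Set ℕ} {W W' : ℕ → Set ℕ} {L L' : ℕ → ℕ} {j a b : ℕ}
    (hW : ∀ i < j, W i = W' i) (hL : ∀ i < j, L i = L' i) :
    fill C W L j a b = fill C W' L' j a b := by
  induction j, a, b using fill.induct C W L with
  | case1 => simp [fill]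
  | case2 j a b m hroom ihl ihr =>
    have hWj := hW j (Nat.lt_succ_self j)
    have hLj := hL j (Nat.lt_succ_self j)
    rw [fill_succ_of_le hroom, fill_succ_of_le (W := W') (L := L') (by rwa [← hWj, ← hLj]),
      ← hWj, ← hLj, ihl (fun i hi => hW i (by omega)) (fun i hi => hL i (by omega)), ihr hW hL]
  | case3 j a b m hroom ih =>
    have hWj := hW j (Nat.lt_succ_self j)
    have hLj := hL j (Nat.lt_succ_self j)
    rw [fill_succ_of_lt (not_le.1 hroom),
      fill_succ_of_lt (W := W') (L := L') (by rw [← hWj, ← hLj]; omega),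
      ih (fun i hi => hW i (by omega)) (fun i hi => hL i (by omega))]

/-- Stage `k + 1` sees the earlier blocks through `min i k`, which keeps the recursion well
founded; `fill` only looks at indices `i ≤ k` anyway. -/
noncomputable def blocks (C : Set ℕ) (c₀ : ℕ) : ℕ → Set ℕ × ℕ
  | 0 => ({c₀}, c₀ + 1)
  | k + 1 =>
    let W i := (blocks C c₀ (min i k)).1
    let L i := (blocks C c₀ (min i k)).2
    (W k ∪ fill C W L (k + 1) (L k) (nextReturn C (W k) (L k)) ∪
      (nextReturn C (W k) (L k) + ·) '' W k, nextReturn C (W k) (L k) + L k)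
termination_by k => k
decreasing_by all_goals exact Nat.lt_succ_of_le (Nat.min_le_right _ _)

theorem isBlockSeq_blocks (C : Set ℕ) (c₀ : ℕ) :
    IsBlockSeq C c₀ (fun k => (blocks C c₀ k).1) (fun k => (blocks C c₀ k).2) where
  set_zero := by rw [blocks]
  len_zero := by rw [blocks]
  set_succ k := by
    rw [blocks]
    simp only [min_self]
    rw [fill_congr (W' := fun k => (blocks C c₀ k).1) (L' := fun k => (blocks C c₀ k).2)
      (fun i hi => by rw [min_eq_left (by omega)]) (fun i hi => by rw [min_eq_left (by omega)])]
  len_succ k := by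
    rw [blocks]
    simp only [min_self]

theorem HasSyndeticReturns.exists_isUniformlyRecurrent_subset {C : Set ℕ}
    (hC : HasSyndeticReturns C) {c₀ : ℕ} (hc₀ : c₀ ∈ C) :
    ∃ D ⊆ C, c₀ ∈ D ∧ IsUniformlyRecurrent D := by
  choose! g hg using hC
  have hS := isBlockSeq_blocks C c₀
  have hW := hS.isGoodBlock hc₀ hg
  exact ⟨_, iUnion_subset fun k => (hW k).subset, mem_iUnion.2 ⟨0, by simp [hS.set_zero]⟩,
    isUniformlyRecurrent_iUnion hW hS.strictMono_len⟩

theorem dynThick_iff_complement_characterization (A : Set ℕ) :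
    DynThick A ↔
      ∀ B : Set ℕ, A ⊆ B → B ≠ Set.univ →
        ∃ F : Finset ℕ, (∀ f ∈ F, f ∉ B) ∧ Thick (⋃ f ∈ F, NSub B f) := by
  refine ⟨fun hA B hAB hB => ?_, dynThick_of_forall_thick⟩
  by_contra! h
  obtain ⟨c₀, hc₀⟩ := (ne_univ_iff_exists_notMem B).1 hB
  obtain ⟨D, hDB, hc₀D, hD⟩ :=
    (hasSyndeticReturns_compl_of_not_thick h).exists_isUniformlyRecurrent_subset hc₀
  obtain ⟨n, hnA, -, hnD⟩ := hA.exists_mem_of_isUniformlyRecurrent hD ⟨c₀, hc₀D⟩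
  exact hDB hnD (hAB hnA)
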